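/- arXiv:2105.04004 — 2 statements merged into one kernel-verified Lean document; each statement's English description precedes it below -/
import Mathlib

section
/- Every connected graph Γ (multigraph, no loops) in which every vertex has valency at least 3 and with χ(Γ) = d ≥ 2, is a contracted descendant of some 3-regular graph Γ' with χ(Γ') = d. That is, Γ can be obtained from a 3-regular graph with the same value of χ by successively contracting edges. -/
/-- An undirected multigraph without loops. -/
structure MGraph where
  V : Type
  E : Type
  ends : E → Sym2 V
  loopless : ∀ e, ¬ (ends e).IsDiag

/-- Adjacency: there is an edge with the given endpoints. -/
def MGraph.Adj (G : MGraph) (u v : G.V) : Prop := ∃ e, G.ends e = s(u, v)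

/-- Connectedness: nonempty vertex set and any two vertices joined by a walk. -/
def MGraph.Connected (G : MGraph) : Prop :=
  Nonempty G.V ∧ ∀ u v : G.V, Relation.ReflTransGen G.Adj u v

/-- The valency of a vertex. -/
noncomputable def MGraph.valency (G : MGraph) (v : G.V) : ℕ :=
  {e : G.E | v ∈ G.ends e}.ncard

/-- χ(Γ) = |E| - |V| + (number of connected components); the components are
the elements of the quotient of the vertex set by the adjacency relation. -/
noncomputable def MGraph.chi (G : MGraph) : ℤ :=
  (Nat.card G.E : ℤ) - Nat.card G.V + Nat.card (Quot G.Adj)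

/-- `IsContraction G G'` : `G'` is obtained from `G` by contracting an edge `e`
which is the unique edge between its two endpoints: there is a surjection of
vertices identifying exactly the endpoints of `e`, and a bijection between the
edges of `G` other than `e` and the edges of `G'`, compatible with endpoints. -/
def IsContraction (G G' : MGraph) : Prop :=
  ∃ e : G.E,
    (∀ e' : G.E, G.ends e' = G.ends e → e' = e) ∧
    ∃ (φ : G.V → G'.V) (ψ : {f : G.E // f ≠ e} ≃ G'.E),
      Function.Surjective φ ∧
      (∀ u v : G.V, φ u = φ v ↔ u = v ∨ (u ∈ G.ends e ∧ v ∈ G.ends e)) ∧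
      ∀ f : {f : G.E // f ≠ e}, G'.ends (ψ f) = Sym2.map φ (G.ends f.1)

/-- `G'` is a contracted descendant of `G` if it is obtained from `G` by a
sequence of edge contractions. -/
def ContractedDescendant (G' G : MGraph) : Prop :=
  Relation.ReflTransGen IsContraction G G'

/-!
Split a vertex `v₀` of valency at least 4: a new vertex takes over two of the edges at `v₀`
and is joined to `v₀` by a new edge, whose contraction gives back the graph. The new vertex
has valency 3 and `v₀` loses one, so the excess `∑ (valency v - 3)` drops by one, while one
vertex and one edge are added to a connected graph, so `χ` is unchanged. Repeat until the
graph is 3-regular.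
-/

open Relation

namespace MGraph

instance (G : MGraph) : Std.Symm G.Adj :=
  ⟨fun _ _ ⟨e, he⟩ => ⟨e, he.trans Sym2.eq_swap⟩⟩

theorem reflTransGen_adj_symm {G : MGraph} {u v : G.V} (h : ReflTransGen G.Adj u v) :
    ReflTransGen G.Adj v u :=
  symm h

variable {G : MGraph}

theorem Connected.card_quot_adj (hG : G.Connected) :
    Nat.card (Quot G.Adj) = 1 := by
  obtain ⟨⟨v⟩, hpath⟩ := hG
  refine Nat.card_eq_one_iff_exists.mpr ⟨Quot.mk _ v, Quot.ind fun u => ?_⟩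
  exact Quot.eqvGen_sound (EqvGen.reflTransGen_le_eqvGen _ _ _ (hpath u v))

theorem exists_ne_of_two_le_valency [Finite G.E] {v : G.V} (h : 2 ≤ G.valency v) :
    ∃ e₁ e₂, v ∈ G.ends e₁ ∧ v ∈ G.ends e₂ ∧ e₁ ≠ e₂ :=
  (Set.one_lt_ncard_iff (Set.toFinite _)).mp h

noncomputable def excess (G : MGraph) : ℕ := ∑ᶠ v, (G.valency v - 3)

section Split

variable (G : MGraph) (v₀ : G.V) (e₁ e₂ : G.E)

open scoped Classical in
noncomputable def splitEnd (e : G.E) (u : G.V) : Option G.V :=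
  if u = v₀ ∧ (e = e₁ ∨ e = e₂) then none else some u

variable {G v₀ e₁ e₂}

@[simp]
theorem getD_splitEnd (e : G.E) (u : G.V) : (G.splitEnd v₀ e₁ e₂ e u).getD v₀ = u := by
  unfold splitEnd
  split_ifs with h
  exacts [h.1.symm, rfl]

theorem splitEnd_injective (e : G.E) : Function.Injective (G.splitEnd v₀ e₁ e₂ e) :=
  fun a b h => by simpa using congrArg (Option.getD · v₀) h

theorem splitEnd_eq_none_iff {e : G.E} {u : G.V} :
    G.splitEnd v₀ e₁ e₂ e u = none ↔ u = v₀ ∧ (e = e₁ ∨ e = e₂) := by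
  unfold splitEnd
  split_ifs with h <;> simp [h]

theorem splitEnd_eq_some_iff {e : G.E} {u w : G.V} :
    G.splitEnd v₀ e₁ e₂ e u = some w ↔ u = w ∧ ¬(u = v₀ ∧ (e = e₁ ∨ e = e₂)) := by
  unfold splitEnd
  split_ifs with h <;> simp_all [eq_comm]

variable (G v₀ e₁ e₂)

/-- `v₀` is split into `some v₀` and a new vertex `none`, joined by a new edge `none`;
the new vertex takes over the ends of `e₁` and `e₂` at `v₀`. -/
noncomputable abbrev split : MGraph where
  V := Option G.V
  E := Option G.E
  ends x := x.elim s(some v₀, none) fun e => (G.ends e).map (G.splitEnd v₀ e₁ e₂ e)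
  loopless := by
    rintro (_ | e)
    · simp
    · simpa [Sym2.isDiag_map (splitEnd_injective e)] using G.loopless e

variable {G v₀ e₁ e₂}

@[simp]
theorem split_ends_none : (G.split v₀ e₁ e₂).ends none = s(some v₀, none) := rfl

@[simp]
theorem split_ends_some (e : G.E) :
    (G.split v₀ e₁ e₂).ends (some e) = (G.ends e).map (G.splitEnd v₀ e₁ e₂ e) := rfl

theorem eq_or_eq_of_none_mem_split_ends {e : G.E}
    (h : none ∈ (G.split v₀ e₁ e₂).ends (some e)) : e = e₁ ∨ e = e₂ := by
  obtain ⟨u, -, hu⟩ := Sym2.mem_map.mp h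
  exact (splitEnd_eq_none_iff.mp hu).2

theorem none_mem_split_ends_some_iff (he₁ : v₀ ∈ G.ends e₁) (he₂ : v₀ ∈ G.ends e₂)
    {e : G.E} : none ∈ (G.split v₀ e₁ e₂).ends (some e) ↔ e = e₁ ∨ e = e₂ := by
  refine ⟨eq_or_eq_of_none_mem_split_ends, fun h => Sym2.mem_map.mpr ⟨v₀, ?_, ?_⟩⟩
  · rcases h with rfl | rfl <;> assumption
  · exact splitEnd_eq_none_iff.mpr ⟨rfl, h⟩

theorem some_mem_split_ends_some_iff {e : G.E} {u : G.V} :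
    some u ∈ (G.split v₀ e₁ e₂).ends (some e) ↔
      u ∈ G.ends e ∧ ¬(u = v₀ ∧ (e = e₁ ∨ e = e₂)) := by
  rw [split_ends_some, Sym2.mem_map]
  simp [splitEnd_eq_some_iff]

theorem isContraction_split : IsContraction (G.split v₀ e₁ e₂) G := by
  refine ⟨none, ?_, fun x => x.getD v₀,
    (Equiv.subtypeEquivRight fun _ => Option.ne_none_iff_isSome).trans
      (Equiv.optionIsSomeEquiv G.E), fun u => ⟨some u, rfl⟩, ?_, ?_⟩
  · rintro (_ | e) h
    · rfl
    have hnone : none ∈ (G.split v₀ e₁ e₂).ends (some e) := by rw [h]; simp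
    have hv₀ : some v₀ ∈ (G.split v₀ e₁ e₂).ends (some e) := by rw [h]; simp
    exact (some_mem_split_ends_some_iff.mp hv₀).2 ⟨rfl, eq_or_eq_of_none_mem_split_ends hnone⟩
      |>.elim
  · rintro (_ | u) (_ | w) <;> aesop
  · rintro ⟨_ | e, he⟩
    · exact (he rfl).elim
    · simp [Sym2.map_map]

theorem valency_split_none [Finite G.E] (he₁ : v₀ ∈ G.ends e₁) (he₂ : v₀ ∈ G.ends e₂)
    (hne : e₁ ≠ e₂) : (G.split v₀ e₁ e₂).valency none = 3 := by
  have hedges :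
      {x : Option G.E | none ∈ (G.split v₀ e₁ e₂).ends x} = {none, some e₁, some e₂} := by
    ext (_ | e)
    · simp
    · rw [Set.mem_ofPred_eq, none_mem_split_ends_some_iff he₁ he₂]
      simp
  rw [valency, hedges, Set.ncard_insert_of_notMem (by simp), Set.ncard_pair (by simpa using hne)]

theorem valency_split_some_self [Finite G.E] (he₁ : v₀ ∈ G.ends e₁) (he₂ : v₀ ∈ G.ends e₂)
    (hne : e₁ ≠ e₂) : (G.split v₀ e₁ e₂).valency (some v₀) = G.valency v₀ - 1 := by
  have hsub : {e₁, e₂} ⊆ {e : G.E | v₀ ∈ G.ends e} := Set.insert_subset he₁ (by simpa using he₂)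
  have hedges : {x : Option G.E | some v₀ ∈ (G.split v₀ e₁ e₂).ends x} =
      insert none (some '' ({e : G.E | v₀ ∈ G.ends e} \ {e₁, e₂})) := by
    ext (_ | e)
    · simp
    · rw [Set.mem_ofPred_eq, some_mem_split_ends_some_iff]
      simp
  have htwo : 2 ≤ G.valency v₀ := Set.ncard_pair hne ▸ Set.ncard_le_ncard hsub
  rw [valency, hedges, Set.ncard_insert_of_notMem (by simp),
    Set.ncard_image_of_injective _ (Option.some_injective _), Set.ncard_sdiff hsub,
    Set.ncard_pair hne]
  rw [valency] at htwo ⊢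
  omega

theorem valency_split_some_of_ne [Finite G.E] {u : G.V} (hu : u ≠ v₀) :
    (G.split v₀ e₁ e₂).valency (some u) = G.valency u := by
  have hedges : {x : Option G.E | some u ∈ (G.split v₀ e₁ e₂).ends x} =
      some '' {e : G.E | u ∈ G.ends e} := by
    ext (_ | e)
    · simp [hu]
    · rw [Set.mem_ofPred_eq, some_mem_split_ends_some_iff]
      simp [hu]
  rw [valency, hedges, Set.ncard_image_of_injective _ (Option.some_injective _), valency]

theorem Connected.split (hG : G.Connected) : (G.split v₀ e₁ e₂).Connected := by
  have hnew : (G.split v₀ e₁ e₂).Adj (some v₀) none := ⟨none, rfl⟩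
  have to_getD (x : Option G.V) :
      ReflTransGen (G.split v₀ e₁ e₂).Adj (some (x.getD v₀)) x := by
    rcases x with _ | u
    exacts [.single hnew, .refl]
  have to_splitEnd (e : G.E) (u : G.V) :
      ReflTransGen (G.split v₀ e₁ e₂).Adj (some u) (G.splitEnd v₀ e₁ e₂ e u) := by
    simpa using to_getD (G.splitEnd v₀ e₁ e₂ e u)
  have lift (a b : G.V) (hab : G.Adj a b) :
      ReflTransGen (G.split v₀ e₁ e₂).Adj (some a) (some b) := by
    obtain ⟨e, he⟩ := hab
    exact ((to_splitEnd e a).tail ⟨some e, by simp [he]⟩).trans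
      (reflTransGen_adj_symm (to_splitEnd e b))
  refine ⟨⟨none⟩, fun x y => ?_⟩
  exact (reflTransGen_adj_symm (to_getD x)).trans (((hG.2 _ _).lift' some lift).trans (to_getD y))

theorem Connected.chi_split [Finite G.V] [Finite G.E] (hG : G.Connected) :
    (G.split v₀ e₁ e₂).chi = G.chi := by
  rw [chi, chi, hG.split.card_quot_adj, hG.card_quot_adj, Finite.card_option,
    Finite.card_option]
  push_cast
  ring

theorem three_le_valency_split [Finite G.E] (he₁ : v₀ ∈ G.ends e₁) (he₂ : v₀ ∈ G.ends e₂)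
    (hne : e₁ ≠ e₂) (hv₀ : 4 ≤ G.valency v₀) (hval : ∀ v, 3 ≤ G.valency v) :
    ∀ x, 3 ≤ (G.split v₀ e₁ e₂).valency x := by
  rintro (_ | u)
  · rw [valency_split_none he₁ he₂ hne]
  · obtain rfl | hu := eq_or_ne u v₀
    · rw [valency_split_some_self he₁ he₂ hne]
      omega
    · exact valency_split_some_of_ne hu ▸ hval u

theorem excess_split [Finite G.V] [Finite G.E] (he₁ : v₀ ∈ G.ends e₁) (he₂ : v₀ ∈ G.ends e₂)
    (hne : e₁ ≠ e₂) (hv₀ : 4 ≤ G.valency v₀) :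
    (G.split v₀ e₁ e₂).excess + 1 = G.excess := by
  classical
  have := Fintype.ofFinite G.V
  have hrest : ∑ u ∈ {v₀}ᶜ, ((G.split v₀ e₁ e₂).valency (some u) - 3) =
      ∑ u ∈ {v₀}ᶜ, (G.valency u - 3) :=
    Finset.sum_congr rfl fun u hu => by rw [valency_split_some_of_ne (by simpa using hu)]
  simp only [excess, finsum_eq_sum_of_fintype, Fintype.sum_option, valency_split_none he₁ he₂ hne,
    Fintype.sum_eq_add_sum_compl v₀, valency_split_some_self he₁ he₂ hne, hrest]
  omega

end Split

theorem exists_cubic_contractedDescendant [Finite G.V] [Finite G.E] (hG : G.Connected)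
    (hval : ∀ v, 3 ≤ G.valency v) :
    ∃ G' : MGraph, Finite G'.V ∧ Finite G'.E ∧ (∀ v, G'.valency v = 3) ∧ G'.chi = G.chi ∧
      ContractedDescendant G G' := by
  induction hn : G.excess using Nat.strong_induction_on generalizing G with
  | _ n ih =>
  by_cases hcubic : ∀ v, G.valency v = 3
  · exact ⟨G, ‹_›, ‹_›, hcubic, rfl, .refl⟩
  obtain ⟨v₀, hv₀⟩ := not_forall.mp hcubic
  replace hv₀ : 4 ≤ G.valency v₀ := by have := hval v₀; omega
  obtain ⟨e₁, e₂, he₁, he₂, hne⟩ := exists_ne_of_two_le_valency (by omega : 2 ≤ G.valency v₀)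
  obtain ⟨G', hV', hE', hcubic', hchi', hdesc⟩ :=
    ih _ (hn ▸ excess_split he₁ he₂ hne hv₀ ▸ Nat.lt_succ_self _) hG.split
      (three_le_valency_split he₁ he₂ hne hv₀ hval) rfl
  exact ⟨G', hV', hE', hcubic', hchi'.trans hG.chi_split, hdesc.tail isContraction_split⟩

end MGraph

theorem stmt1_general (G : MGraph) [Finite G.V] [Finite G.E]
    (hconn : G.Connected)
    (hval : ∀ v : G.V, 3 ≤ G.valency v)
    (d : ℕ) (hchi : G.chi = d) :
    ∃ G' : MGraph, Finite G'.V ∧ Finite G'.E ∧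
      (∀ v : G'.V, G'.valency v = 3) ∧ G'.chi = d ∧
      ContractedDescendant G G' := by
  obtain ⟨G', hV', hE', hcubic, hchi', hdesc⟩ :=
    MGraph.exists_cubic_contractedDescendant hconn hval
  exact ⟨G', hV', hE', hcubic, hchi'.trans hchi, hdesc⟩

theorem stmt1 (G : MGraph) [Finite G.V] [Finite G.E]
    (hconn : G.Connected)
    (hval : ∀ v : G.V, 3 ≤ G.valency v)
    (d : ℕ) (hd : 2 ≤ d) (hchi : G.chi = d) :
    ∃ G' : MGraph, Finite G'.V ∧ Finite G'.E ∧
      (∀ v : G'.V, G'.valency v = 3) ∧ G'.chi = d ∧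
      ContractedDescendant G G' :=
  stmt1_general G hconn hval d hchi
end

section
/- Let ∇ ⊂ ℝ³ be the polytope defined by x,y,z ≥ 0, 1-y-z ≥ 0, 1-x-y ≥ 0. For every positive integer n, the number of lattice points in n∇ equals C(n+3,3) + C(n+2,3) = (2n³ + 9n² + 13n + 6)/6. -/
open Pointwise

def nabla : Set (ℝ × ℝ × ℝ) :=
  {p : ℝ × ℝ × ℝ |
    0 ≤ p.1 ∧
    0 ≤ p.2.1 ∧
    0 ≤ p.2.2 ∧
    0 ≤ 1 - p.2.1 - p.2.2 ∧
    0 ≤ 1 - p.1 - p.2.1}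

/-!
Slicing `n∇` at height `y = k`, the constraints on `x` and `z` decouple into `0 ≤ x, z ≤ n - k`,
so the slice holds `(n - k + 1)²` lattice points and `n∇` holds `1² + 2² + ⋯ + (n + 1)²` of them.
Since `(k + 1)² = C(k + 2, 2) + C(k + 1, 2)`, Pascal's rule telescopes this sum to
`C(n + 3, 3) + C(n + 2, 3)`.
-/

open Finset

lemma mem_smul_nabla_iff {c : ℝ} (hc : 0 < c) (p : ℝ × ℝ × ℝ) :
    p ∈ c • nabla ↔ 0 ≤ p.1 ∧ 0 ≤ p.2.1 ∧ 0 ≤ p.2.2 ∧ p.2.1 + p.2.2 ≤ c ∧ p.1 + p.2.1 ≤ c := by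
  obtain ⟨x, y, z⟩ := p
  rw [Set.mem_smul_set_iff_inv_smul_mem₀ hc.ne']
  simp only [nabla, Prod.smul_mk, smul_eq_mul, Set.mem_ofPred_eq, inv_pos.mpr hc,
    mul_nonneg_iff_of_pos_left, sub_sub, ← mul_add, sub_nonneg, inv_mul_le_iff₀ hc, mul_one]

noncomputable def latticePoints (n : ℕ) : Finset (ℤ × ℤ × ℤ) :=
  (range (n + 1)).biUnion fun y =>
    (Icc (0 : ℤ) (n - y) ×ˢ Icc (0 : ℤ) (n - y)).image fun p => (p.1, (y : ℤ), p.2)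

lemma mem_latticePoints {n : ℕ} {v : ℤ × ℤ × ℤ} :
    v ∈ latticePoints n ↔
      0 ≤ v.1 ∧ 0 ≤ v.2.1 ∧ 0 ≤ v.2.2 ∧ v.2.1 + v.2.2 ≤ n ∧ v.1 + v.2.1 ≤ n := by
  obtain ⟨x, y, z⟩ := v
  simp only [latticePoints, mem_biUnion, mem_image, mem_product, mem_Icc, mem_range,
    Prod.mk.injEq, Prod.exists]
  constructor
  · rintro ⟨k, hk, a, b, ⟨⟨ha₀, ha⟩, hb₀, hb⟩, rfl, rfl, rfl⟩
    omega
  · rintro ⟨hx, hy, hz, hyz, hxy⟩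
    exact ⟨y.toNat, by omega, x, z, ⟨⟨hx, by omega⟩, hz, by omega⟩, rfl, by omega, rfl⟩

lemma card_latticePoints (n : ℕ) :
    #(latticePoints n) = ∑ y ∈ range (n + 1), (n - y + 1) ^ 2 := by
  rw [latticePoints, card_biUnion]
  · refine sum_congr rfl fun y hy => ?_
    have hyn : y ≤ n := Nat.lt_succ_iff.mp (mem_range.mp hy)
    rw [card_image_of_injective _ fun p q h => by simpa [Prod.ext_iff] using h,
      card_product, Int.card_Icc, sq]
    congr <;> omega
  · intro a _ b _ hab
    simp only [disjoint_left, mem_image]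
    rintro _ ⟨p, -, rfl⟩ ⟨q, -, h⟩
    exact hab (by exact_mod_cast (Prod.mk.inj (Prod.mk.inj h).2).1.symm)

lemma succ_sq_eq_choose_two_add_choose_two (m : ℕ) :
    (m + 1) ^ 2 = (m + 2).choose 2 + (m + 1).choose 2 := by
  have hpascal : (m + 2).choose 2 = (m + 1) + (m + 1).choose 2 := by
    rw [Nat.choose_succ_succ', Nat.choose_one_right]
  have hdouble : (m + 1) * m = (m + 1).choose 2 * 2 := by
    simpa using Nat.add_one_mul_choose_eq m 1
  rw [hpascal]
  nlinarith [hdouble]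

lemma sum_range_succ_sq_eq_choose (m : ℕ) :
    ∑ k ∈ range m, (k + 1) ^ 2 = (m + 2).choose 3 + (m + 1).choose 3 := by
  induction m with
  | zero => rfl
  | succ m ih =>
    rw [sum_range_succ, ih, succ_sq_eq_choose_two_add_choose_two,
      Nat.choose_succ_succ' (m + 2) 2, Nat.choose_succ_succ' (m + 1) 2]
    ring

lemma six_mul_sum_range_succ_sq (m : ℕ) :
    6 * ∑ k ∈ range m, (k + 1) ^ 2 = m * (m + 1) * (2 * m + 1) := by
  induction m with
  | zero => simp
  | succ m ih => rw [sum_range_succ, mul_add, ih]; ring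

theorem stmt4 (n : ℕ) (hn : 0 < n) :
    {v : ℤ × ℤ × ℤ | (((v.1 : ℝ), (v.2.1 : ℝ), (v.2.2 : ℝ)) : ℝ × ℝ × ℝ) ∈ (n : ℝ) • nabla}.ncard
        = Nat.choose (n + 3) 3 + Nat.choose (n + 2) 3 ∧
      ((Nat.choose (n + 3) 3 + Nat.choose (n + 2) 3 : ℚ))
        = (2 * (n : ℚ) ^ 3 + 9 * (n : ℚ) ^ 2 + 13 * (n : ℚ) ^ 1 + 6) / 6 := by
  have hset : {v : ℤ × ℤ × ℤ |
      (((v.1 : ℝ), (v.2.1 : ℝ), (v.2.2 : ℝ)) : ℝ × ℝ × ℝ) ∈ (n : ℝ) • nabla}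
      = latticePoints n := by
    ext v
    rw [Set.mem_ofPred_eq, mem_smul_nabla_iff (by exact_mod_cast hn), Finset.mem_coe,
      mem_latticePoints]
    simp only
    norm_cast
  have hsum : #(latticePoints n) = ∑ k ∈ range (n + 1), (k + 1) ^ 2 := by
    rw [card_latticePoints, ← sum_range_reflect]
    exact sum_congr rfl fun k hk => by have := mem_range.mp hk; congr 2; omega
  have hchoose := sum_range_succ_sq_eq_choose (n + 1)
  refine ⟨by rw [hset, Set.ncard_coe_finset, hsum, hchoose], ?_⟩
  have hsix : (6 * ((n + 3).choose 3 + (n + 2).choose 3) : ℚ)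
      = (n + 1) * (n + 2) * (2 * n + 3) := by
    exact_mod_cast hchoose ▸ six_mul_sum_range_succ_sq (n + 1)
  linarith
end
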